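/- arXiv:1902.09741 — 2 statements merged into one kernel-verified Lean document; each statement's English description precedes it below -/
import Mathlib

section
/- For a flag-convex curve Γ: I → Lo_n^1 and the dual curve Γ_⋆(t) = P_η (Γ(-t))^{-⊤} P_η, the southwest minors satisfy m_{Γ_⋆, k}(t) = ± m_{Γ, n-k}(-t) for all t; in particular the zeros of m_{Γ_⋆, k} on -I correspond bijectively (with multiplicity) to the zeros of m_{Γ, n-k} on I. -/
/-! The dual minor is the southwest `k`-minor of `Γ⁻¹` with rows and columns reversed and
transposed, and Jacobi's complementary minor identity relates it to the southwest `(n - k)`-minor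
of `Γ`, since `det Γ = 1`. Jacobi's identity itself comes from
`M * [[1, N₁₂], [0, N₂₂]] = [[M₁₁, 0], [M₂₁, 1]]` whenever `M * N = 1`. -/

open Matrix

variable (n : ℕ)

/-- Lower triangular with unit diagonal (`Lo_n^1`). -/
def unitri (L : Matrix (Fin n) (Fin n) ℝ) : Prop :=
  (∀ i, L i i = 1) ∧ ∀ i j : Fin n, (i : ℕ) < (j : ℕ) → L i j = 0

/-- The set `𝒥`: strictly positive entries on the subdiagonal, zero elsewhere. -/
def inJ (A : Matrix (Fin n) (Fin n) ℝ) : Prop :=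
  ∀ i j : Fin n, ((i : ℕ) = (j : ℕ) + 1 → 0 < A i j) ∧ ((i : ℕ) ≠ (j : ℕ) + 1 → A i j = 0)

/-- The permutation matrix of the top permutation: `(P_η)_{i, n+1-i} = 1`. -/
def Peta : Matrix (Fin n) (Fin n) ℝ :=
  Matrix.of fun i j => if (i : ℕ) + (j : ℕ) + 1 = n then 1 else 0

/-- The southwest `k × k` minor: the submatrix on the last `k` rows and first
`k` columns. -/
def swminor (L : Matrix (Fin n) (Fin n) ℝ) (k : ℕ) (hk : k ≤ n) :
    Matrix (Fin k) (Fin k) ℝ :=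
  L.submatrix (fun i : Fin k => (⟨n - k + (i : ℕ), by have := i.isLt; omega⟩ : Fin n))
    (fun j : Fin k => (⟨(j : ℕ), by have := j.isLt; omega⟩ : Fin n))

section Jacobi

variable {R ι α β : Type*} [CommRing R] [Fintype ι] [DecidableEq ι]
  [Fintype α] [DecidableEq α] [Fintype β] [DecidableEq β]

theorem Matrix.det_mul_det_toBlocks₂₂_of_mul_eq_one {M N : Matrix (α ⊕ β) (α ⊕ β) R}
    (hMN : M * N = 1) : M.det * N.toBlocks₂₂.det = M.toBlocks₁₁.det := by
  rw [← fromBlocks_toBlocks M, ← fromBlocks_toBlocks N, fromBlocks_multiply, ← fromBlocks_one,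
    fromBlocks_inj] at hMN
  obtain ⟨-, h₁₂, -, h₂₂⟩ := hMN
  have key : M * fromBlocks 1 N.toBlocks₁₂ 0 N.toBlocks₂₂ =
      fromBlocks M.toBlocks₁₁ 0 M.toBlocks₂₁ 1 := by
    conv_lhs => rw [← fromBlocks_toBlocks M]
    rw [fromBlocks_multiply, h₁₂, h₂₂]
    simp
  simpa [det_fromBlocks_zero₂₁, det_fromBlocks_zero₁₂] using congrArg det key

theorem Matrix.det_submatrix_equiv_equiv (e₁ e₂ : α ≃ ι) (A : Matrix ι ι R) :
    (A.submatrix e₁ e₂).det = Equiv.Perm.sign (e₂.symm.trans e₁) * A.det := by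
  simpa using det_reindex e₁.symm e₂.symm A

theorem Matrix.det_mul_det_submatrix_inr_of_mul_eq_one {A B : Matrix ι ι R} (hAB : A * B = 1)
    (eR eC : α ⊕ β ≃ ι) :
    (A.submatrix eR eC).det * (B.submatrix (eC ∘ Sum.inr) (eR ∘ Sum.inr)).det =
      (A.submatrix (eR ∘ Sum.inl) (eC ∘ Sum.inl)).det :=
  det_mul_det_toBlocks₂₂_of_mul_eq_one (N := B.submatrix eC eR) (by simp [hAB])

end Jacobi

theorem Peta_eq_toMatrix_revPerm : Peta n = (Fin.revPerm (n := n)).toPEquiv.toMatrix := by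
  ext i j
  simp only [Peta, of_apply, PEquiv.toMatrix_apply, Equiv.toPEquiv_apply, Option.mem_def,
    Option.some.injEq, Fin.revPerm_apply, Fin.ext_iff, Fin.val_rev]
  congr 1
  apply propext
  omega

theorem Peta_mul_mul_Peta (A : Matrix (Fin n) (Fin n) ℝ) :
    Peta n * A * Peta n = A.submatrix Fin.rev Fin.rev := by
  rw [Peta_eq_toMatrix_revPerm, PEquiv.toMatrix_toPEquiv_mul, PEquiv.mul_toMatrix_toPEquiv]
  rfl

theorem swminor_Peta_mul_transpose_mul_Peta (A : Matrix (Fin n) (Fin n) ℝ) (k : ℕ) (hk : k ≤ n) :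
    swminor n (Peta n * Aᵀ * Peta n) k hk = (swminor n A k hk)ᵀ.submatrix Fin.rev Fin.rev := by
  ext i j
  simp only [Peta_mul_mul_Peta, swminor, submatrix_apply, transpose_apply]
  congr 1 <;> ext <;> simp only [Fin.val_rev] <;> omega

theorem det_swminor_Peta_mul_transpose_mul_Peta (A : Matrix (Fin n) (Fin n) ℝ) (k : ℕ)
    (hk : k ≤ n) : (swminor n (Peta n * Aᵀ * Peta n) k hk).det = (swminor n A k hk).det := by
  rw [swminor_Peta_mul_transpose_mul_Peta]
  exact (det_submatrix_equiv_self Fin.revPerm _).trans (det_transpose _)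

def finSplitEquiv (k : ℕ) (hk : k ≤ n) : Fin (n - k) ⊕ Fin k ≃ Fin n :=
  finSumFinEquiv.trans (finCongr (Nat.sub_add_cancel hk))

/-- Indexing rows by `finSplitSwapEquiv` (last `n - k`, then first `k`) and columns by
`finSplitEquiv` (first `n - k`, then last `k`) puts the southwest `(n - k)`-minor of a matrix in
the top-left block, and the southwest `k`-minor of its inverse in the bottom-right one. -/
def finSplitSwapEquiv (k : ℕ) (hk : k ≤ n) : Fin (n - k) ⊕ Fin k ≃ Fin n :=
  (Equiv.sumComm _ _).trans (finSumFinEquiv.trans (finCongr (Nat.add_sub_cancel' hk)))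

theorem submatrix_finSplitSwapEquiv_inl_finSplitEquiv_inl (A : Matrix (Fin n) (Fin n) ℝ) (k : ℕ)
    (hk : k ≤ n) :
    A.submatrix (finSplitSwapEquiv n k hk ∘ Sum.inl) (finSplitEquiv n k hk ∘ Sum.inl) =
      swminor n A (n - k) (Nat.sub_le n k) := by
  ext i j
  simp only [swminor, submatrix_apply, Function.comp_apply, finSplitEquiv, finSplitSwapEquiv]
  congr 1
  ext
  simp
  omega

theorem submatrix_finSplitEquiv_inr_finSplitSwapEquiv_inr (A : Matrix (Fin n) (Fin n) ℝ) (k : ℕ)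
    (hk : k ≤ n) :
    A.submatrix (finSplitEquiv n k hk ∘ Sum.inr) (finSplitSwapEquiv n k hk ∘ Sum.inr) =
      swminor n A k hk :=
  rfl

def swminorSign (k : ℕ) (hk : k ≤ n) : ℝ :=
  (Equiv.Perm.sign ((finSplitEquiv n k hk).symm.trans (finSplitSwapEquiv n k hk)) : ℤ)

theorem swminorSign_mul_self (k : ℕ) (hk : k ≤ n) :
    swminorSign n k hk * swminorSign n k hk = 1 := by
  rw [swminorSign, ← Int.cast_mul, ← Units.val_mul, Int.units_mul_self, Units.val_one, Int.cast_one]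

theorem swminorSign_ne_zero (k : ℕ) (hk : k ≤ n) : swminorSign n k hk ≠ 0 :=
  left_ne_zero_of_mul_eq_one (swminorSign_mul_self n k hk)

theorem det_swminor_of_mul_eq_one {A B : Matrix (Fin n) (Fin n) ℝ} (hAB : A * B = 1) (k : ℕ)
    (hk : k ≤ n) :
    swminorSign n k hk * A.det * (swminor n B k hk).det =
      (swminor n A (n - k) (Nat.sub_le n k)).det := by
  rw [← submatrix_finSplitEquiv_inr_finSplitSwapEquiv_inr,
    ← submatrix_finSplitSwapEquiv_inl_finSplitEquiv_inl, swminorSign,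
    ← det_submatrix_equiv_equiv]
  exact det_mul_det_submatrix_inr_of_mul_eq_one hAB _ _

theorem det_swminor_inv_of_det_eq_one {L : Matrix (Fin n) (Fin n) ℝ} (hL : L.det = 1) (k : ℕ)
    (hk : k ≤ n) :
    (swminor n L⁻¹ k hk).det = swminorSign n k hk * (swminor n L (n - k) (Nat.sub_le n k)).det := by
  have hLinv : L * L⁻¹ = 1 := mul_nonsing_inv L (by simp [hL])
  rw [← det_swminor_of_mul_eq_one n hLinv, hL, mul_one, ← mul_assoc, swminorSign_mul_self,
    one_mul]

theorem unitri.det_eq_one {L : Matrix (Fin n) (Fin n) ℝ} (hL : unitri n L) : L.det = 1 := by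
  rw [det_of_isLowerTriangular L fun i j hij => hL.2 i j hij]
  simp [hL.1]

/-- for a flag-convex `Γ : I → Lo_n^1` and the dual curve
`Γ_⋆(t) = P_η (Γ(-t))^{-⊤} P_η`, one has `m_{Γ_⋆,k}(t) = ± m_{Γ,n-k}(-t)` (a fixed
sign), and in particular the zeros of `m_{Γ_⋆,k}` on `-I` correspond to the zeros of
`m_{Γ,n-k}` on `I`. -/
theorem dual_curve_swminor (I : Set ℝ)
    (Γ : ℝ → Matrix (Fin n) (Fin n) ℝ)
    (hL : ∀ t ∈ I, unitri n (Γ t))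
    (k : ℕ) (hk2 : k ≤ n - 1) :
    ∃ ε : ℝ, (ε = 1 ∨ ε = -1) ∧
      ∀ t : ℝ, -t ∈ I →
        ((swminor n (Peta n * ((Γ (-t))⁻¹)ᵀ * Peta n) k (by omega)).det =
          ε * (swminor n (Γ (-t)) (n - k) (by omega)).det ∧
        ((swminor n (Peta n * ((Γ (-t))⁻¹)ᵀ * Peta n) k (by omega)).det = 0 ↔
          (swminor n (Γ (-t)) (n - k) (by omega)).det = 0)) := by
  have hk : k ≤ n := by omega
  refine ⟨swminorSign n k hk, ?_, fun t ht => ?_⟩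
  · exact mul_self_eq_one_iff.mp (swminorSign_mul_self n k hk)
  have hdual := (det_swminor_Peta_mul_transpose_mul_Peta n _ k hk).trans
    (det_swminor_inv_of_det_eq_one n (hL _ ht).det_eq_one k hk)
  exact ⟨hdual, by rw [hdual, mul_eq_zero, or_iff_right (swminorSign_ne_zero n k hk)]⟩
end

section
/- For any G ∈ Lo_n^1 there exists t_+ > 0 such that G·exp(tN) is totally positive for all t > t_+, and there exists t_- < 0 such that G·exp(tN) is totally negative for all t < t_-. -/
open Matrix

variable (n : ℕ)

/-- `L` is totally positive in `Lo_n^1`. -/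
def totPos (L : Matrix (Fin n) (Fin n) ℝ) : Prop :=
  unitri n L ∧
  ∀ (k : ℕ) (r c : Fin k → Fin n), StrictMono r → StrictMono c →
    (∃ M : Matrix (Fin n) (Fin n) ℝ, unitri n M ∧ (M.submatrix r c).det ≠ 0) →
    0 < (L.submatrix r c).det

/-- The diagonal matrix `P = diag(1, -1, 1, …, (-1)^{n-1})`. -/
def Pdiag : Matrix (Fin n) (Fin n) ℝ :=
  Matrix.diagonal fun i => (-1 : ℝ) ^ (i : ℕ)

/-- `L` is totally negative: `P L P` is totally positive. -/
def totNeg (L : Matrix (Fin n) (Fin n) ℝ) : Prop :=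
  totPos n (Pdiag n * L * Pdiag n)

/-- The lower shift matrix `N`. -/
def lowerShift : Matrix (Fin n) (Fin n) ℝ :=
  Matrix.of fun i j => if (i : ℕ) = (j : ℕ) + 1 then 1 else 0

/-!
The `(a, b)` entry of `exp (t N)` is `t ^ (a - b) / (a - b)!`, so `exp (t N) = D_t (exp N) D_t⁻¹`
with `D_t = diag (t ^ i)`. Hence the minor of `G exp (t N)` with rows `r` and columns `c` is
`t ^ (∑ r - ∑ c)` times the same minor of `(D_t⁻¹ G D_t) exp N`, and `D_t⁻¹ G D_t → 1` as
`t → ∞` because `G` is unitriangular. The minors that do not vanish identically on `Lo_n^1` are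
those with `c ≤ r`, and for these the minor `det (1 / (r i - c j)!)` of `exp N` is positive.
Total negativity as `t → -∞` follows by conjugating with `P = D_{-1}`.
-/

open Filter Topology

noncomputable def invFact (m : ℤ) : ℝ := if 0 ≤ m then ((m.toNat).factorial : ℝ)⁻¹ else 0

lemma invFact_of_neg {m : ℤ} (h : m < 0) : invFact m = 0 := if_neg h.not_ge

lemma invFact_natCast (m : ℕ) : invFact m = (m.factorial : ℝ)⁻¹ := by simp [invFact]

lemma invFact_zero : invFact 0 = 1 := by simpa using invFact_natCast 0

lemma invFact_sub_one (m : ℤ) : invFact (m - 1) = m * invFact m := by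
  rcases lt_or_ge 0 m with hm | hm
  · obtain ⟨k, rfl⟩ : ∃ k : ℕ, m = k + 1 := ⟨(m - 1).toNat, by omega⟩
    rw [add_sub_cancel_right, ← Nat.cast_succ, invFact_natCast, invFact_natCast,
      Nat.factorial_succ]
    push_cast
    field_simp
  · rw [invFact_of_neg (by omega)]
    rcases hm.lt_or_eq with hm | rfl
    · rw [invFact_of_neg hm, mul_zero]
    · rw [Int.cast_zero, zero_mul]

/-- The minor of `exp N` with rows `r` and columns `c` (see `exp_smul_lowerShift_apply`). -/
noncomputable def invFactMatrix {k : ℕ} (r c : Fin k → ℤ) : Matrix (Fin k) (Fin k) ℝ :=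
  of fun i j => invFact (r i - c j)

lemma exists_le_and_le_perm_apply {k : ℕ} (σ : Equiv.Perm (Fin k)) (i : Fin k) :
    ∃ j ≤ i, i ≤ σ j := by
  by_contra! h
  have hcard := Finset.card_le_card_of_injOn σ
    (fun j hj => Finset.mem_Iio.2 (h j (Finset.mem_Iic.1 hj))) σ.injective.injOn
  rw [Fin.card_Iic, Fin.card_Iio] at hcard
  omega

/-- Every permutation meets the zero block `{a ≤ i} × {b ≥ i}`, which is too large. -/
lemma det_eq_zero_of_monotone_of_lt {α R : Type*} [Preorder α] [CommRing R] {k : ℕ}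
    {r c : Fin k → α} (hr : Monotone r) (hc : Monotone c) (B : Matrix (Fin k) (Fin k) R)
    (hB : ∀ a b, r a < c b → B a b = 0) {i : Fin k} (hi : r i < c i) : B.det = 0 := by
  rw [det_apply]
  refine Finset.sum_eq_zero fun σ _ => ?_
  obtain ⟨j, hji, hij⟩ := exists_le_and_le_perm_apply σ⁻¹ i
  rw [Finset.prod_eq_zero (Finset.mem_univ (σ⁻¹ j)), smul_zero]
  rw [show σ (σ⁻¹ j) = j from σ.apply_symm_apply j]
  exact hB _ _ ((hr hji).trans_lt (hi.trans_le (hc hij)))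

lemma det_submatrix_diagonal_mul_mul_diagonal {m k R : Type*} [Fintype m] [DecidableEq m]
    [Fintype k] [DecidableEq k] [CommRing R] (d e : m → R) (M : Matrix m m R) (r c : k → m) :
    ((diagonal d * M * diagonal e).submatrix r c).det
      = (∏ i, d (r i)) * (∏ j, e (c j)) * (M.submatrix r c).det := by
  have : (diagonal d * M * diagonal e).submatrix r c
      = of fun i j => d (r i) * (of fun i j => e (c j) * M.submatrix r c i j) i j := by
    ext i j
    simp [diagonal_mul, mul_diagonal]
    ring
  rw [this, det_mul_column, det_mul_row]
  ring

lemma invFactMatrix_update_sub_one {k : ℕ} (r c : Fin k → ℤ) (i a b : Fin k) :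
    invFactMatrix (Function.update r i (r i - 1)) c a b
      = (if a = i then ((r i - c b : ℤ) : ℝ) else 1) * invFactMatrix r c a b := by
  by_cases ha : a = i
  · subst ha
    simp [invFactMatrix, sub_right_comm _ (1 : ℤ), invFact_sub_one]
  · simp [invFactMatrix, ha]

/-- The minor of `exp (t N)` is `t ^ D * det (invFactMatrix r c)` with `D = ∑ i, (r i - c i)`;
this identity is its derivative in `t`, taken row by row. -/
lemma sum_det_invFactMatrix_update {k : ℕ} (r c : Fin k → ℤ) :
    ∑ i, (invFactMatrix (Function.update r i (r i - 1)) c).det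
      = ((∑ i, (r i - c i) : ℤ) : ℝ) * (invFactMatrix r c).det := by
  simp_rw [det_apply', invFactMatrix_update_sub_one, Finset.prod_mul_distrib]
  rw [Finset.sum_comm, Finset.mul_sum]
  refine Finset.sum_congr rfl fun σ _ => ?_
  have hrow : ∀ i, (∏ j, if σ j = i then ((r i - c j : ℤ) : ℝ) else 1)
      = ((r i - c (σ⁻¹ i) : ℤ) : ℝ) := by
    intro i
    simp_rw [← Equiv.Perm.eq_inv_iff_eq (f := σ)]
    simp
  simp_rw [hrow, ← Finset.mul_sum, ← Finset.sum_mul]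
  have hsum : ∑ i, ((r i - c (σ⁻¹ i) : ℤ) : ℝ) = ((∑ i, (r i - c i) : ℤ) : ℝ) := by
    push_cast
    rw [Finset.sum_sub_distrib, Finset.sum_sub_distrib,
      Equiv.sum_comp σ⁻¹ (fun i => ((c i : ℤ) : ℝ))]
  rw [hsum]
  ring

lemma det_invFactMatrix_self {k : ℕ} {c : Fin k → ℤ} (hc : StrictMono c) :
    (invFactMatrix c c).det = 1 := by
  rw [det_of_isLowerTriangular (invFactMatrix c c)
    fun i j (hij : i < j) => invFact_of_neg (by linarith [hc hij])]
  simp [invFactMatrix, invFact_zero]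

lemma sum_update_sub_one {k : ℕ} (r : Fin k → ℤ) (i : Fin k) :
    ∑ j, Function.update r i (r i - 1) j = ∑ j, r j - 1 := by
  rw [Finset.sum_update_of_mem (Finset.mem_univ i), ← Finset.add_sum_erase _ _ (Finset.mem_univ i),
    Finset.sdiff_singleton_eq_erase]
  ring

lemma monotone_update_sub_one {k : ℕ} {r : Fin k → ℤ} (hr : StrictMono r) (i : Fin k) :
    Monotone (Function.update r i (r i - 1)) := by
  intro a b hab
  rcases hab.lt_or_eq with h | rfl
  · have := hr h
    simp only [Function.update_apply]
    split_ifs <;> subst_vars <;> omega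
  · rfl

lemma strictMono_update_sub_one {k : ℕ} {r : Fin k → ℤ} (hr : StrictMono r) {i : Fin k}
    (hi : ∀ j < i, r j < r i - 1) : StrictMono (Function.update r i (r i - 1)) := by
  intro a b hab
  have := hr hab
  simp only [Function.update_apply]
  split_ifs with ha hb hb <;> subst_vars
  · exact absurd hab (lt_irrefl _)
  · omega
  · exact hi a hab
  · exact this

lemma det_invFactMatrix_nonneg_of_monotone {k : ℕ} {u c : Fin k → ℤ} (hu : Monotone u)
    (hc : StrictMono c) (hpos : StrictMono u → (∀ i, c i ≤ u i) → 0 < (invFactMatrix u c).det) :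
    0 ≤ (invFactMatrix u c).det := by
  by_cases hlow : ∃ j, u j < c j
  · obtain ⟨j, hj⟩ := hlow
    exact (det_eq_zero_of_monotone_of_lt hu hc.monotone _
      (fun a b hab => invFact_of_neg (sub_neg.2 hab)) hj).ge
  push Not at hlow
  by_cases hinj : Function.Injective u
  · exact (hpos (hu.strictMono_iff_injective.2 hinj) hlow).le
  obtain ⟨a, b, hab, hne⟩ : ∃ a b, u a = u b ∧ a ≠ b := by
    simpa [Function.Injective] using hinj
  exact (det_zero_of_row_eq hne (funext fun j => by simp [invFactMatrix, hab])).ge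

/-- Take the first `i` with `c i < r i`. -/
lemma exists_strictMono_update_sub_one {k : ℕ} {r c : Fin k → ℤ} (hr : StrictMono r)
    (hc : StrictMono c) (hcr : ∀ i, c i ≤ r i) (hlt : ∃ i, c i < r i) :
    ∃ i, StrictMono (Function.update r i (r i - 1)) ∧
      ∀ j, c j ≤ Function.update r i (r i - 1) j := by
  obtain ⟨i, hi⟩ := hlt
  obtain ⟨i₀, hi₀, hmin⟩ :=
    Finset.exists_min_image {i | c i < r i} id ⟨i, by simpa using hi⟩
  simp only [Finset.mem_filter, Finset.mem_univ, true_and, id] at hi₀ hmin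
  have hbefore : ∀ j < i₀, r j < r i₀ - 1 := fun j hj => by
    have : r j = c j := le_antisymm (not_lt.1 fun h => (hmin j h).not_gt hj) (hcr j)
    linarith [hc hj]
  refine ⟨i₀, strictMono_update_sub_one hr hbefore, fun j => ?_⟩
  rcases eq_or_ne j i₀ with rfl | hj
  · simp only [Function.update_self]; omega
  · simpa [Function.update_of_ne hj] using hcr j

/-- Induction on `∑ i, (r i - c i)` through `sum_det_invFactMatrix_update`, whose summands are
all nonnegative and one of which is positive. -/
theorem det_invFactMatrix_pos {k : ℕ} {r c : Fin k → ℤ} (hr : StrictMono r) (hc : StrictMono c)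
    (hcr : ∀ i, c i ≤ r i) : 0 < (invFactMatrix r c).det := by
  obtain ⟨d, hd⟩ : ∃ d : ℕ, ∑ i, (r i - c i) = d :=
    ⟨_, (Int.toNat_of_nonneg (Finset.sum_nonneg fun i _ => sub_nonneg.2 (hcr i))).symm⟩
  induction d generalizing r with
  | zero =>
    have hrc : r = c := funext fun i => by
      have := (Finset.sum_eq_zero_iff_of_nonneg fun j _ => sub_nonneg.2 (hcr j)).1 hd i
        (Finset.mem_univ i)
      omega
    rw [hrc, det_invFactMatrix_self hc]
    exact one_pos
  | succ d ih =>
    have hsum (i : Fin k) : ∑ j, (Function.update r i (r i - 1) j - c j) = d := by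
      rw [Finset.sum_sub_distrib, sum_update_sub_one]
      rw [Finset.sum_sub_distrib] at hd
      push_cast at hd
      omega
    have hlt : ∃ i, c i < r i := by
      by_contra! h
      have : ∑ i, (r i - c i) = 0 := Finset.sum_eq_zero fun i _ => by linarith [h i, hcr i]
      omega
    obtain ⟨i₀, hmono, hle⟩ := exists_strictMono_update_sub_one hr hc hcr hlt
    have hsum_pos : 0 < ∑ i, (invFactMatrix (Function.update r i (r i - 1)) c).det :=
      Finset.sum_pos' (fun i _ => det_invFactMatrix_nonneg_of_monotone
          (monotone_update_sub_one hr i) hc fun hu hcu => ih hu hcu (hsum i))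
        ⟨i₀, Finset.mem_univ _, ih hmono hle (hsum i₀)⟩
    rw [sum_det_invFactMatrix_update, hd] at hsum_pos
    exact pos_of_mul_pos_right hsum_pos (by positivity)

noncomputable def powDiag (s : ℝ) : Matrix (Fin n) (Fin n) ℝ := diagonal fun i => s ^ (i : ℕ)

section

variable {n}

lemma lowerShift_pow_apply (m : ℕ) (a b : Fin n) :
    (lowerShift n ^ m) a b = if (a : ℕ) = b + m then 1 else 0 := by
  induction m generalizing a with
  | zero => simp [one_apply, Fin.ext_iff]
  | succ m ih =>
    rw [pow_succ', mul_apply]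
    by_cases ha : (a : ℕ) = 0
    · refine (Finset.sum_eq_zero fun x _ => ?_).trans (if_neg (by omega)).symm
      simp [lowerShift, ha]
    · have ha' : (a : ℕ) - 1 < n := by omega
      rw [Finset.sum_eq_single ⟨(a : ℕ) - 1, ha'⟩ (fun x _ hx => by
        simp [lowerShift, Fin.ext_iff] at hx ⊢; omega) (by simp), ih]
      simp only [lowerShift, of_apply]
      split_ifs <;> norm_num <;> omega

lemma exp_smul_lowerShift_apply (t : ℝ) (a b : Fin n) :
    NormedSpace.exp (t • lowerShift n) a b = invFact (a - b) * t ^ ((a : ℕ) - b) := by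
  have hnil : ∀ m ∉ Finset.range n, ((m.factorial : ℝ)⁻¹ • (t • lowerShift n) ^ m) = 0 := by
    intro m hm
    have : lowerShift n ^ m = 0 := by
      ext i j
      rw [lowerShift_pow_apply, if_neg (by simp at hm; omega), Matrix.zero_apply]
    rw [smul_pow, this, smul_zero, smul_zero]
  rw [congrFun (NormedSpace.exp_eq_tsum ℝ) (t • lowerShift n), tsum_eq_sum hnil, Matrix.sum_apply]
  simp only [smul_pow, Matrix.smul_apply, lowerShift_pow_apply, smul_eq_mul, mul_ite, mul_one,
    mul_zero]
  by_cases hba : (b : ℕ) ≤ a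
  · have hcond (m : ℕ) : ((a : ℕ) = b + m) ↔ (m = a - b) := by omega
    simp only [hcond, Finset.sum_ite_eq', Finset.mem_range, show (a : ℕ) - b < n by omega,
      if_true]
    rw [show ((a : ℤ) - b) = ((a - b : ℕ) : ℤ) by push_cast [hba]; ring, invFact_natCast]
  · rw [Finset.sum_eq_zero fun m _ => if_neg (by omega), invFact_of_neg (by omega), zero_mul]

lemma unitri_exp_smul_lowerShift (t : ℝ) : unitri n (NormedSpace.exp (t • lowerShift n)) := by
  refine ⟨fun i => ?_, fun i j hij => ?_⟩
  · simp [exp_smul_lowerShift_apply, invFact_zero]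
  · rw [exp_smul_lowerShift_apply, invFact_of_neg (by omega), zero_mul]

lemma unitri.mul {L M : Matrix (Fin n) (Fin n) ℝ} (hL : unitri n L) (hM : unitri n M) :
    unitri n (L * M) := by
  refine ⟨fun i => ?_, fun i j hij => (mul_apply ..).trans (Finset.sum_eq_zero fun m _ => ?_)⟩
  · rw [mul_apply, Finset.sum_eq_single i (fun m _ hm => ?_) (by simp), hL.1, hM.1, one_mul]
    rcases lt_or_gt_of_ne (Fin.val_ne_of_ne hm) with h | h
    · rw [hM.2 m i h, mul_zero]
    · rw [hL.2 i m h, zero_mul]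
  · rcases lt_or_ge (i : ℕ) m with h | h
    · rw [hL.2 i m h, zero_mul]
    · rw [hM.2 m j (by omega), mul_zero]

lemma powDiag_mul_powDiag_inv {s : ℝ} (hs : s ≠ 0) : powDiag n s * powDiag n s⁻¹ = 1 := by
  simp [powDiag, diagonal_mul_diagonal, hs]

lemma powDiag_mul_mul_powDiag_inv_apply (s : ℝ) (M : Matrix (Fin n) (Fin n) ℝ) (a b : Fin n) :
    (powDiag n s * M * powDiag n s⁻¹) a b = s ^ (a : ℕ) * M a b * s⁻¹ ^ (b : ℕ) := by
  simp [powDiag, diagonal_mul, mul_diagonal]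

lemma powDiag_mul_exp_mul_powDiag_inv {s : ℝ} (hs : s ≠ 0) (t : ℝ) :
    powDiag n s * NormedSpace.exp (t • lowerShift n) * powDiag n s⁻¹
      = NormedSpace.exp ((s * t) • lowerShift n) := by
  ext a b
  rw [powDiag_mul_mul_powDiag_inv_apply, exp_smul_lowerShift_apply, exp_smul_lowerShift_apply]
  by_cases hba : (b : ℕ) ≤ a
  · obtain ⟨m, hm⟩ := Nat.exists_eq_add_of_le hba
    rw [hm, Nat.add_sub_cancel_left, pow_add, inv_pow, mul_pow]
    field_simp
  · rw [invFact_of_neg (by omega)]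
    ring

lemma unitri.powDiag_mul_mul_powDiag_inv {G : Matrix (Fin n) (Fin n) ℝ} (hG : unitri n G)
    {s : ℝ} (hs : s ≠ 0) : unitri n (powDiag n s * G * powDiag n s⁻¹) := by
  refine ⟨fun i => ?_, fun i j hij => ?_⟩
  · rw [powDiag_mul_mul_powDiag_inv_apply, hG.1, mul_one, inv_pow, mul_inv_cancel₀ (by positivity)]
  · rw [powDiag_mul_mul_powDiag_inv_apply, hG.2 i j hij, mul_zero, zero_mul]

lemma unitri.tendsto_powDiag_inv_mul_mul_powDiag {G : Matrix (Fin n) (Fin n) ℝ}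
    (hG : unitri n G) :
    Tendsto (fun t : ℝ => powDiag n t⁻¹ * G * powDiag n t⁻¹⁻¹) atTop (𝓝 1) := by
  refine tendsto_pi_nhds.2 fun a => tendsto_pi_nhds.2 fun b => ?_
  simp only [powDiag_mul_mul_powDiag_inv_apply]
  simp only [inv_inv]
  rcases lt_trichotomy (a : ℕ) b with hab | hab | hab
  · simp [hG.2 a b hab, one_apply_ne (Fin.ne_of_val_ne hab.ne)]
  · obtain rfl := Fin.ext hab
    refine tendsto_const_nhds.congr' ((eventually_ne_atTop 0).mono fun t ht => ?_)
    dsimp only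
    rw [hG.1, one_apply_eq, mul_one, inv_pow, inv_mul_cancel₀ (pow_ne_zero _ ht)]
  · obtain ⟨m, hm⟩ := Nat.exists_eq_add_of_lt hab
    have hlim : Tendsto (fun t : ℝ => G a b * t⁻¹ ^ (m + 1)) atTop (𝓝 0) := by
      simpa using (tendsto_inv_atTop_zero.pow (m + 1)).const_mul (G a b)
    rw [one_apply_ne (Fin.ne_of_val_ne hab.ne')]
    refine hlim.congr' ((eventually_ne_atTop 0).mono fun t ht => ?_)
    dsimp only
    rw [hm, add_assoc, pow_add t⁻¹ (b : ℕ), inv_pow t (b : ℕ)]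
    field_simp

theorem unitri.eventually_det_submatrix_mul_exp_pos {G : Matrix (Fin n) (Fin n) ℝ}
    (hG : unitri n G) {k : ℕ} {r c : Fin k → Fin n} (hr : StrictMono r) (hc : StrictMono c)
    (hcr : ∀ i, c i ≤ r i) :
    ∀ᶠ t : ℝ in atTop, 0 < ((G * NormedSpace.exp (t • lowerShift n)).submatrix r c).det := by
  set E := NormedSpace.exp ((1 : ℝ) • lowerShift n)
  have hE : 0 < (E.submatrix r c).det := by
    have : E.submatrix r c = invFactMatrix (fun i => (r i : ℕ)) (fun j => (c j : ℕ)) := by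
      ext i j
      simpa [E, invFactMatrix] using exp_smul_lowerShift_apply 1 (r i) (c j)
    rw [this]
    exact det_invFactMatrix_pos (Nat.strictMono_cast.comp (Fin.val_strictMono.comp hr))
      (Nat.strictMono_cast.comp (Fin.val_strictMono.comp hc)) fun i => by simpa using hcr i
  have hcont : Continuous fun X : Matrix (Fin n) (Fin n) ℝ => ((X * E).submatrix r c).det :=
    ((continuous_id.matrix_mul continuous_const).matrix_submatrix r c).matrix_det
  have hlim := (hcont.tendsto 1).comp hG.tendsto_powDiag_inv_mul_mul_powDiag
  rw [one_mul] at hlim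
  filter_upwards [hlim.eventually_const_lt hE, eventually_gt_atTop 0] with t ht htpos
  have hconj : G * NormedSpace.exp (t • lowerShift n)
      = powDiag n t * (powDiag n t⁻¹ * G * powDiag n t⁻¹⁻¹ * E) * powDiag n t⁻¹ := by
    have hexp : NormedSpace.exp (t • lowerShift n) = powDiag n t * E * powDiag n t⁻¹ := by
      rw [powDiag_mul_exp_mul_powDiag_inv htpos.ne', mul_one]
    rw [hexp, inv_inv]
    conv_lhs => rw [← Matrix.one_mul G, ← powDiag_mul_powDiag_inv htpos.ne']
    simp only [Matrix.mul_assoc]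
  rw [hconj, powDiag, powDiag, det_submatrix_diagonal_mul_mul_diagonal]
  exact mul_pos (by positivity) ht

lemma unitri.le_of_det_submatrix_ne_zero {M : Matrix (Fin n) (Fin n) ℝ} (hM : unitri n M)
    {k : ℕ} {r c : Fin k → Fin n} (hr : Monotone r) (hc : Monotone c)
    (hdet : (M.submatrix r c).det ≠ 0) (i : Fin k) : c i ≤ r i :=
  not_lt.1 fun hi => hdet <| det_eq_zero_of_monotone_of_lt hr hc _ (fun _ _ hab => hM.2 _ _ hab) hi

theorem unitri.eventually_totPos_mul_exp {G : Matrix (Fin n) (Fin n) ℝ} (hG : unitri n G) :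
    ∀ᶠ t : ℝ in atTop, totPos n (G * NormedSpace.exp (t • lowerShift n)) := by
  have hminors : ∀ᶠ t : ℝ in atTop, ∀ (k : Fin (n + 1)) (r c : Fin k → Fin n), StrictMono r →
      StrictMono c → (∀ i, c i ≤ r i) →
      0 < ((G * NormedSpace.exp (t • lowerShift n)).submatrix r c).det := by
    simp only [eventually_all]
    exact fun k r c hr hc hcr => hG.eventually_det_submatrix_mul_exp_pos hr hc hcr
  filter_upwards [hminors] with t ht
  refine ⟨hG.mul (unitri_exp_smul_lowerShift t), fun k r c hr hc ⟨M, hM, hdet⟩ => ?_⟩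
  have hk : k < n + 1 := by
    simpa using Nat.lt_succ_of_le (Fintype.card_le_of_injective r hr.injective)
  exact ht ⟨k, hk⟩ r c hr hc (hM.le_of_det_submatrix_ne_zero hr.monotone hc.monotone hdet)

lemma Pdiag_eq_powDiag : Pdiag n = powDiag n (-1) := rfl

lemma Pdiag_eq_powDiag_inv : Pdiag n = powDiag n (-1)⁻¹ := by
  rw [inv_neg_one, Pdiag_eq_powDiag]

lemma Pdiag_mul_Pdiag : Pdiag n * Pdiag n = 1 := by
  nth_rw 2 [Pdiag_eq_powDiag_inv]
  exact powDiag_mul_powDiag_inv (by norm_num)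

lemma unitri.Pdiag_mul_mul_Pdiag {G : Matrix (Fin n) (Fin n) ℝ} (hG : unitri n G) :
    unitri n (Pdiag n * G * Pdiag n) := by
  nth_rw 2 [Pdiag_eq_powDiag_inv]
  exact hG.powDiag_mul_mul_powDiag_inv (by norm_num)

lemma totNeg_mul_exp_iff (G : Matrix (Fin n) (Fin n) ℝ) (t : ℝ) :
    totNeg n (G * NormedSpace.exp (t • lowerShift n))
      ↔ totPos n (Pdiag n * G * Pdiag n * NormedSpace.exp ((-t) • lowerShift n)) := by
  rw [totNeg, ← neg_one_mul t, ← powDiag_mul_exp_mul_powDiag_inv (by norm_num),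
    ← Pdiag_eq_powDiag_inv, ← Pdiag_eq_powDiag]
  conv_lhs => rw [← Matrix.mul_one G, ← Pdiag_mul_Pdiag]
  simp only [Matrix.mul_assoc]

end

/-- for every `G ∈ Lo_n^1` there is `t_+ > 0` with `G·exp(tN)` totally
positive for all `t > t_+`, and `t_- < 0` with `G·exp(tN)` totally negative for all
`t < t_-`. -/
theorem eventually_totPos_totNeg (G : Matrix (Fin n) (Fin n) ℝ) (hG : unitri n G) :
    (∃ tp : ℝ, 0 < tp ∧ ∀ t : ℝ, tp < t →
        totPos n (G * NormedSpace.exp (t • lowerShift n))) ∧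
    (∃ tm : ℝ, tm < 0 ∧ ∀ t : ℝ, t < tm →
        totNeg n (G * NormedSpace.exp (t • lowerShift n))) := by
  have hpos := (atTop_basis_Ioi' 0).eventually_iff.1 hG.eventually_totPos_mul_exp
  obtain ⟨tp, htp, hneg⟩ :=
    (atTop_basis_Ioi' 0).eventually_iff.1 hG.Pdiag_mul_mul_Pdiag.eventually_totPos_mul_exp
  exact ⟨hpos, -tp, by linarith, fun t ht =>
    (totNeg_mul_exp_iff G t).2 (hneg (show tp < -t by linarith))⟩
end
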